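/- arXiv:2309.07783 — 4 statements merged into one kernel-verified Lean document; each statement's English description precedes it below -/
import Mathlib

section
/- Let f : I → ℝ be α-Hölder continuous on a closed interval I ⊂ ℝ with 0 < α < 1. Then for every θ with 0 < θ < α, the regularized Assouad spectrum of Graph(f) satisfies dim_{A,reg}^θ(Graph(f)) ≤ (2 − α − θ)/(1 − θ). -/
open Set Metric Filter Topology MeasureTheory

/-- Least number of sets of diameter at most `r` needed to cover `F` (junk `0` if no finite cover). -/
noncomputable def coverN (F : Set (ℝ × ℝ)) (r : ℝ) : ℕ :=
  sInf {n : ℕ | ∃ U : Fin n → Set (ℝ × ℝ), F ⊆ ⋃ i, U i ∧ ∀ i, Metric.diam (U i) ≤ r}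

/-- Oscillation of `f` over `J`. -/
noncomputable def osc (f : ℝ → ℝ) (J : Set ℝ) : ℝ :=
  sSup {x | ∃ t ∈ J, ∃ s ∈ J, x = |f t - f s|}

/-- Graph of `f` over `I`. -/
def Graph' (f : ℝ → ℝ) (I : Set ℝ) : Set (ℝ × ℝ) := (fun t => (t, f t)) '' I

/-- Assouad spectrum with parameter `θ`, defined via scales `r = R^(1/θ)`. -/
noncomputable def assouadSpectrum (E : Set (ℝ × ℝ)) (θ : ℝ) : ℝ :=
  sInf {β : ℝ | 0 < β ∧ ∃ C > 0, ∀ z ∈ E, ∀ R : ℝ, 0 < R → R < 1 →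
    (coverN (Metric.closedBall z R ∩ E) (R ^ (1/θ)) : ℝ) ≤ C * (R / R ^ (1/θ)) ^ β}

/-- Regularized (upper) Assouad spectrum: `sup_{0<θ'<θ} dim_A^{θ'}`. -/
noncomputable def assouadSpectrumReg (E : Set (ℝ × ℝ)) (θ : ℝ) : ℝ :=
  sSup {d : ℝ | ∃ θ' : ℝ, 0 < θ' ∧ θ' < θ ∧ d = assouadSpectrum E θ'}

/-- Assouad dimension, via covering numbers. -/
noncomputable def assouadDim (E : Set (ℝ × ℝ)) : ℝ :=
  sInf {β : ℝ | 0 < β ∧ ∃ C > 0, ∀ z ∈ E, ∀ R r : ℝ, 0 < r → r ≤ R →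
    (coverN (Metric.closedBall z R ∩ E) r : ℝ) ≤ C * (R / r) ^ β}

/-- Upper box dimension, via covering numbers. -/
noncomputable def upperBoxDim (E : Set (ℝ × ℝ)) : ℝ :=
  Filter.limsup (fun r : ℝ => Real.log (coverN E r) / Real.log (1 / r)) (nhdsWithin 0 (Set.Ioi 0))

/-! Cover the part of the graph above a column of width `r` by squares of side `r`: Hölder
continuity bounds the oscillation of `f` there by `2 C r ^ α`, so about `r ^ (α - 1)` squares
suffice. The `2 R / r` columns meeting a ball of radius `R` thus give
`N(B(z, R) ∩ Graph f, r) ≲ R r ^ (α - 2)`, which for `r = R ^ (1 / θ)` is exactly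
`(R / r) ^ ((2 - α - θ) / (1 - θ))`; this exponent increases with `θ`, so it also bounds the
regularized spectrum. -/

def gridCell (x₀ r : ℝ) (j : ℕ) : Set ℝ := Icc (x₀ + j * r) (x₀ + j * r + r)

lemma exists_lt_mem_gridCell {r : ℝ} (hr : 0 < r) {x₀ h u : ℝ} (hu : u ∈ Icc x₀ (x₀ + h)) :
    ∃ j < ⌊h / r⌋₊ + 1, u ∈ gridCell x₀ r j := by
  have hu₀ : 0 ≤ (u - x₀) / r := div_nonneg (by linarith [hu.1]) hr.le
  refine ⟨⌊(u - x₀) / r⌋₊,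
    Nat.lt_succ_of_le (Nat.floor_le_floor (by gcongr; linarith [hu.2])), ?_, ?_⟩
  · have := (le_div_iff₀ hr).1 (Nat.floor_le hu₀)
    linarith
  · have := (div_lt_iff₀ hr).1 (Nat.lt_floor_add_one ((u - x₀) / r))
    linarith

lemma diam_gridCell_prod_le {r : ℝ} (hr : 0 ≤ r) (x₀ y₀ : ℝ) (i j : ℕ) :
    Metric.diam (gridCell x₀ r i ×ˢ gridCell y₀ r j) ≤ r := by
  refine Metric.diam_le_of_forall_dist_le hr ?_
  rintro ⟨p₁, p₂⟩ ⟨hp₁, hp₂⟩ ⟨q₁, q₂⟩ ⟨hq₁, hq₂⟩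
  rw [Prod.dist_eq]
  exact max_le (by simpa using Real.dist_le_of_mem_Icc hp₁ hq₁)
    (by simpa using Real.dist_le_of_mem_Icc hp₂ hq₂)

lemma coverN_le_mul_of_forall_mem_gridCell {F : Set (ℝ × ℝ)} {r : ℝ} (hr : 0 ≤ r) {N M : ℕ}
    (x₀ : ℝ) (y₀ : ℕ → ℝ)
    (hF : ∀ p ∈ F, ∃ i < N, ∃ j < M, p.1 ∈ gridCell x₀ r i ∧ p.2 ∈ gridCell (y₀ i) r j) :
    coverN F r ≤ N * M := by
  let U : Fin N × Fin M → Set (ℝ × ℝ) := fun ij => gridCell x₀ r ij.1 ×ˢ gridCell (y₀ ij.1) r ij.2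
  refine Nat.sInf_le
    ⟨fun k => U (finProdFinEquiv.symm k), ?_, fun k => diam_gridCell_prod_le hr _ _ _ _⟩
  intro p hp
  obtain ⟨i, hi, j, hj, hpi, hpj⟩ := hF p hp
  exact mem_iUnion.2 ⟨finProdFinEquiv (⟨i, hi⟩, ⟨j, hj⟩), by simpa [U] using ⟨hpi, hpj⟩⟩

section Holder

variable {f : ℝ → ℝ} {a b α C : ℝ} (hα : 0 ≤ α) (hC : 0 ≤ C)
  (hf : ∀ t ∈ Icc a b, ∀ s ∈ Icc a b, |f t - f s| ≤ C * |t - s| ^ α)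
include hα hC hf

lemma exists_mapsTo_Icc_of_holder {r : ℝ} (u : ℝ) :
    ∃ c, MapsTo f (Icc u (u + r) ∩ Icc a b) (Icc c (c + 2 * C * r ^ α)) := by
  rcases (Icc u (u + r) ∩ Icc a b).eq_empty_or_nonempty with h | ⟨τ, hτu, hτ⟩
  · exact ⟨0, h ▸ mapsTo_empty _ _⟩
  refine ⟨f τ - C * r ^ α, fun t ⟨htu, ht⟩ => ?_⟩
  have hdist : |t - τ| ≤ r := by simpa [Real.dist_eq] using Real.dist_le_of_mem_Icc htu hτu
  have hosc : |f t - f τ| ≤ C * r ^ α := (hf t ht τ hτ).trans (by gcongr)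
  rw [abs_le] at hosc
  constructor <;> linarith [hosc.1, hosc.2]

lemma coverN_closedBall_inter_graph_le (z : ℝ × ℝ) {R r : ℝ} (hr : 0 < r) :
    coverN (closedBall z R ∩ Graph' f (Icc a b)) r ≤
      (⌊2 * R / r⌋₊ + 1) * (⌊2 * C * r ^ α / r⌋₊ + 1) := by
  choose c hc using fun i : ℕ => exists_mapsTo_Icc_of_holder hα hC hf (r := r) (z.1 - R + i * r)
  refine coverN_le_mul_of_forall_mem_gridCell hr.le (z.1 - R) c ?_
  rintro _ ⟨hball, t, ht, rfl⟩
  have htz : t ∈ Icc (z.1 - R) (z.1 - R + 2 * R) := by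
    have := (le_max_left _ _).trans (mem_closedBall.1 hball)
    rw [Real.dist_eq, abs_le] at this
    constructor <;> linarith [this.1, this.2]
  obtain ⟨i, hi, hti⟩ := exists_lt_mem_gridCell hr htz
  obtain ⟨j, hj, hfj⟩ := exists_lt_mem_gridCell hr (hc i ⟨hti, ht⟩)
  exact ⟨i, hi, j, hj, hti, hfj⟩

lemma coverN_closedBall_inter_graph_le_mul_rpow (hα1 : α ≤ 1) (z : ℝ × ℝ) {R r : ℝ}
    (hr : 0 < r) (hrR : r ≤ R) (hr1 : r ≤ 1) :
    (coverN (closedBall z R ∩ Graph' f (Icc a b)) r : ℝ) ≤ 3 * (2 * C + 1) * (R * r ^ (α - 2)) := by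
  have hq : 1 ≤ R / r := (one_le_div hr).2 hrR
  have hs : 1 ≤ r ^ (α - 1) := Real.one_le_rpow_of_pos_of_le_one_of_nonpos hr hr1 (by linarith)
  have hs_eq : r ^ α / r = r ^ (α - 1) := by rw [Real.rpow_sub_one hr.ne']
  have hqs : R / r * r ^ (α - 1) = R * r ^ (α - 2) := by
    rw [show α - 1 = α - 2 + 1 by ring, Real.rpow_add_one hr.ne']
    field_simp
  have hN := Nat.floor_le (show 0 ≤ 2 * R / r from div_nonneg (by linarith) hr.le)
  have hM := Nat.floor_le (show 0 ≤ 2 * C * r ^ α / r from div_nonneg (by positivity) hr.le)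
  calc (coverN (closedBall z R ∩ Graph' f (Icc a b)) r : ℝ)
      ≤ ((⌊2 * R / r⌋₊ + 1) * (⌊2 * C * r ^ α / r⌋₊ + 1) : ℕ) :=
        Nat.cast_le.2 (coverN_closedBall_inter_graph_le hα hC hf z hr)
    _ ≤ (2 * R / r + 1) * (2 * C * r ^ α / r + 1) := by
        push_cast
        gcongr
        linarith
    _ = (2 * (R / r) + 1) * (2 * C * r ^ (α - 1) + 1) := by rw [← hs_eq]; ring
    _ ≤ (3 * (R / r)) * ((2 * C + 1) * r ^ (α - 1)) := by gcongr <;> nlinarith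
    _ = 3 * (2 * C + 1) * (R * r ^ (α - 2)) := by rw [← hqs]; ring

end Holder

lemma mul_rpow_rpow_sub_two_eq {R θ : ℝ} (hR : 0 < R) (hθ : θ ≠ 0) (hθ1 : θ ≠ 1) (α : ℝ) :
    R * (R ^ (1 / θ)) ^ (α - 2) = (R / R ^ (1 / θ)) ^ ((2 - α - θ) / (1 - θ)) := by
  have h1θ : 1 - θ ≠ 0 := sub_ne_zero.2 (Ne.symm hθ1)
  calc R * (R ^ (1 / θ)) ^ (α - 2) = R ^ (1 + 1 / θ * (α - 2)) := by
        rw [Real.rpow_add hR, Real.rpow_one, Real.rpow_mul hR.le]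
    _ = R ^ ((1 - 1 / θ) * ((2 - α - θ) / (1 - θ))) := by
        congr 1
        field_simp
        ring
    _ = (R / R ^ (1 / θ)) ^ ((2 - α - θ) / (1 - θ)) := by
        rw [Real.rpow_mul hR.le, Real.rpow_sub hR, Real.rpow_one]

theorem assouadSpectrum_graph_le {f : ℝ → ℝ} {a b α C θ : ℝ} (hα : 0 ≤ α) (hα1 : α ≤ 1)
    (hC : 0 ≤ C) (hf : ∀ t ∈ Icc a b, ∀ s ∈ Icc a b, |f t - f s| ≤ C * |t - s| ^ α)
    (hθ : 0 < θ) (hθ1 : θ < 1) :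
    assouadSpectrum (Graph' f (Icc a b)) θ ≤ (2 - α - θ) / (1 - θ) := by
  have hβ : 0 < (2 - α - θ) / (1 - θ) := div_pos (by linarith) (by linarith)
  refine csInf_le ⟨0, fun _ h => h.1.le⟩ ⟨hβ, 3 * (2 * C + 1), by positivity, ?_⟩
  intro z _ R hR hR1
  have hrR : R ^ (1 / θ) ≤ R := by
    simpa using Real.rpow_le_rpow_of_exponent_ge hR hR1.le (one_le_one_div hθ hθ1.le)
  rw [← mul_rpow_rpow_sub_two_eq hR hθ.ne' hθ1.ne α]
  exact coverN_closedBall_inter_graph_le_mul_rpow hα hC hf hα1 z (by positivity) hrR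
    (hrR.trans hR1.le)

theorem stmt2_general (f : ℝ → ℝ) (a b α C θ : ℝ) (hα : 0 < α) (hα1 : α < 1)
    (hC : 0 < C)
    (hf : ∀ t ∈ Set.Icc a b, ∀ s ∈ Set.Icc a b, |f t - f s| ≤ C * |t - s| ^ α)
    (hθα : θ < α) :
    assouadSpectrumReg (Graph' f (Set.Icc a b)) θ ≤ (2 - α - θ) / (1 - θ) := by
  refine Real.sSup_le ?_ (div_nonneg (by linarith) (by linarith))
  rintro _ ⟨θ', hθ', hθ'θ, rfl⟩
  refine (assouadSpectrum_graph_le hα.le hα1.le hC.le hf hθ' (by linarith)).trans ?_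
  -- `(2 - α - θ) / (1 - θ) = 1 + (1 - α) / (1 - θ)` is increasing in `θ < 1`
  rw [div_le_div_iff₀ (by linarith) (by linarith)]
  nlinarith

/-- regularized Assouad spectrum bound for Hölder graphs. -/
theorem stmt2 (f : ℝ → ℝ) (a b α C θ : ℝ) (hab : a ≤ b) (hα : 0 < α) (hα1 : α < 1)
    (hC : 0 < C)
    (hf : ∀ t ∈ Set.Icc a b, ∀ s ∈ Set.Icc a b, |f t - f s| ≤ C * |t - s| ^ α)
    (hθ : 0 < θ) (hθα : θ < α) :
    assouadSpectrumReg (Graph' f (Set.Icc a b)) θ ≤ (2 - α - θ) / (1 - θ) :=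
  stmt2_general f a b α C θ hα hα1 hC hf hθα
end

section
/- Let f ∈ W^{1,p}(I), 1 < p < ∞, be continuous on a closed bounded interval I, and fix 0 < θ < p/(p+1). Then there exists a constant C (depending on θ, p, and ‖f'‖_{L^p(I)}) such that for every point z₀ = (x₀, f(x₀)) on Graph(f), every 0 < R ≤ 1, and every 0 < r ≤ R^{1/θ}, the covering number N(Q(z₀,R) ∩ Graph(f), r) ≤ C·(R/r)^{1 + θ/((1−θ)p)}, where Q(z₀,R) is the axis-parallel square of side length 2R centered at z₀. -/
open Set Metric Filter Topology MeasureTheory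

/-- Graph of `f` over `I`. -/
def funGraph (f : ℝ → ℝ) (I : Set ℝ) : Set (ℝ × ℝ) := (fun t => (t, f t)) '' I

/-! Split the graph over `[x₀ - R, x₀ + R]` into about `R / r` columns of width at most `r`.
Over a column `J` the graph has height at most `∫_J |f'|`, so it is covered by
`2 r⁻¹ ∫_J |f'| + 2` squares of side `r`; summing gives `N ≤ 2 r⁻¹ ∫ |f'| + O(R / r)`.
A Hölder-type bound (Young's inequality `a ≤ l + l^(1-p) a^p` with `l = R^(-1/p)`) gives
`∫_{x₀-R}^{x₀+R} |f'| ≲ (1 + ‖f'‖ₚᵖ) R^(1-1/p)`, and `r ≤ R^(1/θ)` turns `R^(1-1/p) / r`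
into at most `(R / r)^(1 + θ/((1-θ)p))`. -/

theorem coverN_le_card {ι : Type*} {F : Set (ℝ × ℝ)} {r : ℝ} (s : Finset ι)
    (U : ι → Set (ℝ × ℝ)) (hF : F ⊆ ⋃ i ∈ s, U i) (hU : ∀ i ∈ s, diam (U i) ≤ r) :
    coverN F r ≤ s.card := by
  refine Nat.sInf_le
    ⟨fun k => U (s.equivFin.symm k), fun z hz => ?_, fun k => hU _ (Subtype.prop _)⟩
  obtain ⟨i, hi, hzi⟩ := mem_iUnion₂.1 (hF hz)
  exact mem_iUnion.2 ⟨s.equivFin ⟨i, hi⟩, by simpa using hzi⟩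

theorem Icc_subset_biUnion_Icc {X : Type*} [LinearOrder X] (N : ℕ) (a : ℕ → X) :
    Icc (a 0) (a (N + 1)) ⊆ ⋃ i ∈ Finset.range (N + 1), Icc (a i) (a (i + 1)) := by
  induction N with
  | zero => simp
  | succ N ih => calc
    _ ⊆ Icc (a 0) (a (N + 1)) ∪ Icc (a (N + 1)) (a (N + 2)) := Icc_subset_Icc_union_Icc
    _ ⊆ _ := by simpa [Finset.range_add_one] using
                  union_subset_union_right (Icc (a (N + 1)) (a (N + 2))) ih

theorem diam_Icc_prod_Icc_le {a b c d r : ℝ} (hr : 0 ≤ r) (hab : b - a ≤ r) (hcd : d - c ≤ r) :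
    diam (Icc a b ×ˢ Icc c d) ≤ r :=
  diam_le_of_forall_dist_le hr fun z hz w hw => by
    rw [Prod.dist_eq]
    exact max_le ((Real.dist_le_of_mem_Icc hz.1 hw.1).trans hab)
      ((Real.dist_le_of_mem_Icc hz.2 hw.2).trans hcd)

theorem coverN_le_sum_of_abs_sub_le {F : Set (ℝ × ℝ)} {f : ℝ → ℝ} {s O : ℕ → ℝ} {r : ℝ}
    (N : ℕ) (hr : 0 < r) (hmesh : ∀ i ≤ N, s (i + 1) - s i ≤ r) (hO : ∀ i, 0 ≤ O i)
    (hosc : ∀ i ≤ N, ∀ t ∈ Icc (s i) (s (i + 1)), |f t - f (s i)| ≤ O i)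
    (hF : F ⊆ funGraph f (Icc (s 0) (s (N + 1)))) :
    (coverN F r : ℝ) ≤ ∑ i ∈ Finset.range (N + 1), (2 * O i / r + 2) := by
  set M : ℕ → ℕ := fun i => ⌈2 * O i / r⌉₊
  set w : ℕ → ℕ → ℝ := fun i j => f (s i) - O i + j * r
  set U : (Σ _ : ℕ, ℕ) → Set (ℝ × ℝ) := fun q =>
    Icc (s q.1) (s (q.1 + 1)) ×ˢ Icc (w q.1 q.2) (w q.1 (q.2 + 1))
  have hcover : F ⊆ ⋃ q ∈ (Finset.range (N + 1)).sigma fun i => Finset.range (M i + 1), U q := by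
    intro z hz
    obtain ⟨t, ht, rfl⟩ := hF hz
    obtain ⟨i, hi, hti⟩ := mem_iUnion₂.1 (Icc_subset_biUnion_Icc N s ht)
    have hft := abs_le.1 (hosc i (Finset.mem_range_succ_iff.1 hi) t hti)
    have hM : 2 * O i ≤ M i * r := (div_le_iff₀ hr).1 (Nat.le_ceil _)
    have hftw : f t ∈ Icc (w i 0) (w i (M i + 1)) := by
      simp only [w, mem_Icc]
      push_cast
      constructor <;> linarith
    obtain ⟨j, hj, hftj⟩ := mem_iUnion₂.1 (Icc_subset_biUnion_Icc (M i) (w i) hftw)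
    exact mem_iUnion₂.2 ⟨⟨i, j⟩, Finset.mem_sigma.2 ⟨hi, hj⟩, hti, hftj⟩
  have hdiam : ∀ q ∈ (Finset.range (N + 1)).sigma fun i => Finset.range (M i + 1),
      diam (U q) ≤ r := by
    rintro ⟨i, j⟩ hq
    refine diam_Icc_prod_Icc_le hr.le (hmesh i ?_) (by simp only [w]; push_cast; linarith)
    exact Finset.mem_range_succ_iff.1 (Finset.mem_sigma.1 hq).1
  calc (coverN F r : ℝ) ≤ ∑ i ∈ Finset.range (N + 1), ((M i : ℝ) + 1) := by
        have := coverN_le_card _ U hcover hdiam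
        simp only [Finset.card_sigma, Finset.card_range] at this
        exact_mod_cast this
    _ ≤ ∑ i ∈ Finset.range (N + 1), (2 * O i / r + 2) := by
        refine Finset.sum_le_sum fun i _ => ?_
        linarith [Nat.ceil_lt_add_one (div_nonneg (mul_nonneg zero_le_two (hO i)) hr.le)]

theorem le_add_rpow_one_sub_mul_rpow {a l p : ℝ} (ha : 0 ≤ a) (hl : 0 < l) (hp : 1 ≤ p) :
    a ≤ l + l ^ (1 - p) * a ^ p := by
  rcases le_or_gt a l with hal | hla
  · nlinarith [Real.rpow_nonneg hl.le (1 - p), Real.rpow_nonneg ha p]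
  · have ha0 : 0 < a := hl.trans hla
    have hpow : a ^ (1 - p) ≤ l ^ (1 - p) := Real.rpow_le_rpow_of_nonpos hl hla.le (by linarith)
    have hsplit : a ^ (1 - p) * a ^ p = a := by
      rw [← Real.rpow_add ha0, sub_add_cancel, Real.rpow_one]
    nlinarith [mul_le_mul_of_nonneg_right hpow (Real.rpow_nonneg ha p)]

theorem integrable_abs_of_integrable_abs_rpow {α : Type*} [MeasurableSpace α] {μ : Measure α}
    [IsFiniteMeasure μ] {g : α → ℝ} {p : ℝ} (hp : 1 ≤ p)
    (hg : Integrable (fun x => |g x| ^ p) μ) : Integrable (fun x => |g x|) μ := by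
  have hroot : (fun x => |g x|) = fun x => (|g x| ^ p) ^ p⁻¹ := funext fun x => by
    rw [← Real.rpow_mul (abs_nonneg _), mul_inv_cancel₀ (by linarith), Real.rpow_one]
  have hmeas : AEStronglyMeasurable (fun x => |g x|) μ := by
    rw [hroot]
    exact (Real.continuous_rpow_const (by positivity)).comp_aestronglyMeasurable
      hg.aestronglyMeasurable
  refine ((integrable_const 1).add hg).mono' hmeas (Eventually.of_forall fun x => ?_)
  simpa using le_add_rpow_one_sub_mul_rpow (abs_nonneg (g x)) one_pos hp

theorem intervalIntegral_abs_le_of_integrableOn_abs_rpow {g : ℝ → ℝ} {c d p L : ℝ} (hp : 1 ≤ p)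
    (hL : 0 < L) (hcd : c ≤ d) (hlen : d - c ≤ L) (hg : IntegrableOn (fun t => |g t| ^ p) (Icc c d)) :
    ∫ t in c..d, |g t| ≤ (1 + ∫ t in Icc c d, |g t| ^ p) * L ^ (1 - 1 / p) := by
  set l := L ^ (-(1 / p))
  have hl : 0 < l := Real.rpow_pos_of_pos hL _
  have hLl : L * l = L ^ (1 - 1 / p) := by
    rw [sub_eq_add_neg, Real.rpow_add hL, Real.rpow_one]
  have hl1p : l ^ (1 - p) = L ^ (1 - 1 / p) := by
    rw [← Real.rpow_mul hL.le]
    congr 1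
    field_simp
    ring
  rw [intervalIntegral.integral_of_le hcd, ← integral_Icc_eq_integral_Ioc]
  calc ∫ t in Icc c d, |g t|
      ≤ ∫ t in Icc c d, (l + l ^ (1 - p) * |g t| ^ p) :=
        integral_mono_of_nonneg (Eventually.of_forall fun t => abs_nonneg (g t))
          ((integrable_const l).add (hg.const_mul _))
          (Eventually.of_forall fun t => le_add_rpow_one_sub_mul_rpow (abs_nonneg (g t)) hl hp)
    _ = (d - c) * l + l ^ (1 - p) * ∫ t in Icc c d, |g t| ^ p := by
        rw [integral_add (integrable_const l) (hg.const_mul _), setIntegral_const,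
          integral_const_mul, Real.volume_real_Icc_of_le hcd, smul_eq_mul]
    _ ≤ L * l + l ^ (1 - p) * ∫ t in Icc c d, |g t| ^ p := by gcongr
    _ = (1 + ∫ t in Icc c d, |g t| ^ p) * L ^ (1 - 1 / p) := by rw [hLl, hl1p]; ring

theorem abs_sub_le_intervalIntegral_abs {f f' : ℝ → ℝ} {u t v : ℝ} (hut : u ≤ t) (htv : t ≤ v)
    (hf' : IntervalIntegrable (fun x => |f' x|) volume u v)
    (hFTC : f t - f u = ∫ x in u..t, f' x) : |f t - f u| ≤ ∫ x in u..v, |f' x| := by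
  rw [hFTC]
  exact (intervalIntegral.abs_integral_le_integral_abs hut).trans
    (intervalIntegral.integral_mono_interval le_rfl hut htv
      (Eventually.of_forall fun x => abs_nonneg (f' x)) hf')

theorem coverN_le_of_subset_funGraph {F : Set (ℝ × ℝ)} {f f' : ℝ → ℝ} {c d r : ℝ}
    (hcd : c ≤ d) (hr : 0 < r) (hf' : IntegrableOn (fun t => |f' t|) (Icc c d))
    (hFTC : ∀ x ∈ Icc c d, ∀ y ∈ Icc c d, f x - f y = ∫ t in y..x, f' t)
    (hF : F ⊆ funGraph f (Icc c d)) :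
    (coverN F r : ℝ) ≤ 2 / r * (∫ t in c..d, |f' t|) + 2 * ((d - c) / r + 2) := by
  set N := ⌈(d - c) / r⌉₊
  set h := (d - c) / (N + 1)
  set s : ℕ → ℝ := fun i => c + i * h
  have hh : 0 ≤ h := div_nonneg (sub_nonneg.2 hcd) (by positivity)
  have hhr : h ≤ r := by
    rw [div_le_iff₀ (by positivity)]
    have := (div_le_iff₀ hr).1 (Nat.le_ceil ((d - c) / r))
    nlinarith
  have hs_mono : Monotone s := fun i j hij => by
    simp only [s]
    gcongr
  have hs0 : s 0 = c := by simp [s]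
  have hsN : s (N + 1) = d := by
    simp only [s, h]
    push_cast
    field_simp
    ring
  have hcol : ∀ i ≤ N, Icc (s i) (s (i + 1)) ⊆ Icc c d := fun i hi =>
    Icc_subset_Icc (hs0 ▸ hs_mono (Nat.zero_le i)) (hsN ▸ hs_mono (by omega))
  have hint : ∀ i ≤ N, IntervalIntegrable (fun t => |f' t|) volume (s i) (s (i + 1)) :=
    fun i hi => (hf'.mono_set (by rw [uIcc_of_le (hs_mono i.le_succ)]; exact hcol i hi)
      ).intervalIntegrable
  have hsum : ∑ i ∈ Finset.range (N + 1), ∫ t in s i..s (i + 1), |f' t| = ∫ t in c..d, |f' t| := by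
    rw [intervalIntegral.sum_integral_adjacent_intervals fun i hi => hint i (by omega), hs0, hsN]
  have hosc : ∀ i ≤ N, ∀ t ∈ Icc (s i) (s (i + 1)),
      |f t - f (s i)| ≤ ∫ t in s i..s (i + 1), |f' t| := fun i hi t ht =>
    abs_sub_le_intervalIntegral_abs ht.1 ht.2 (hint i hi)
      (hFTC t (hcol i hi ht) (s i) (hcol i hi (left_mem_Icc.2 (ht.1.trans ht.2))))
  have hN : (N : ℝ) < (d - c) / r + 1 := Nat.ceil_lt_add_one (div_nonneg (sub_nonneg.2 hcd) hr.le)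
  calc (coverN F r : ℝ)
      ≤ ∑ i ∈ Finset.range (N + 1), (2 * (∫ t in s i..s (i + 1), |f' t|) / r + 2) :=
        coverN_le_sum_of_abs_sub_le N hr (fun i _ => by simp only [s]; push_cast; linarith)
          (fun i => intervalIntegral.integral_nonneg (hs_mono i.le_succ) fun t _ => abs_nonneg _)
          hosc (by rwa [hs0, hsN])
    _ = 2 / r * (∫ t in c..d, |f' t|) + 2 * (N + 1) := by
        rw [← hsum, Finset.sum_add_distrib, Finset.mul_sum, Finset.sum_const, Finset.card_range]
        congr 1
        · exact Finset.sum_congr rfl fun i _ => by ring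
        · ring
    _ ≤ 2 / r * (∫ t in c..d, |f' t|) + 2 * ((d - c) / r + 2) := by linarith

theorem closedBall_inter_funGraph_subset (f : ℝ → ℝ) (s : Set ℝ) (x₀ R : ℝ) :
    closedBall (x₀, f x₀) R ∩ funGraph f s ⊆ funGraph f (s ∩ Icc (x₀ - R) (x₀ + R)) := by
  rintro _ ⟨hz, t, ht, rfl⟩
  have hdist : dist t x₀ ≤ R := (le_max_left _ _).trans (mem_closedBall.1 hz)
  rw [Real.dist_eq, abs_le] at hdist
  exact ⟨t, ⟨ht, by linarith, by linarith⟩, rfl⟩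

theorem coverN_closedBall_inter_funGraph_le {f f' : ℝ → ℝ} {a b p x₀ R r : ℝ} (hp : 1 ≤ p)
    (hInt : IntegrableOn (fun t => |f' t| ^ p) (Icc a b))
    (hFTC : ∀ x ∈ Icc a b, ∀ y ∈ Icc a b, f x - f y = ∫ t in y..x, f' t)
    (hx₀ : x₀ ∈ Icc a b) (hR : 0 < R) (hr : 0 < r) :
    (coverN (closedBall (x₀, f x₀) R ∩ funGraph f (Icc a b)) r : ℝ) ≤
      4 * (1 + ∫ t in Icc a b, |f' t| ^ p) * (R ^ (1 - 1 / p) / r) + 4 * (R / r) + 4 := by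
  set c := max a (x₀ - R)
  set d := min b (x₀ + R)
  have hcd : c ≤ d := max_le (le_min (hx₀.1.trans hx₀.2) (by linarith [hx₀.1]))
    (le_min (by linarith [hx₀.2]) (by linarith))
  have hlen : d - c ≤ 2 * R := by linarith [min_le_right b (x₀ + R), le_max_right a (x₀ - R)]
  have hsub : Icc c d ⊆ Icc a b := Icc_subset_Icc (le_max_left _ _) (min_le_left _ _)
  have hcover := coverN_le_of_subset_funGraph hcd hr
    (integrable_abs_of_integrable_abs_rpow hp (hInt.mono_set hsub))
    (fun x hx y hy => hFTC x (hsub hx) y (hsub hy))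
    ((closedBall_inter_funGraph_subset f _ x₀ R).trans (by rw [Icc_inter_Icc]))
  have hintegral := intervalIntegral_abs_le_of_integrableOn_abs_rpow hp (by positivity) hcd hlen
    (hInt.mono_set hsub)
  have hK : ∫ t in Icc c d, |f' t| ^ p ≤ ∫ t in Icc a b, |f' t| ^ p :=
    setIntegral_mono_set hInt (Eventually.of_forall fun t => by positivity) hsub.eventuallyLE
  have h2R : (2 * R) ^ (1 - 1 / p) ≤ 2 * R ^ (1 - 1 / p) := by
    rw [Real.mul_rpow zero_le_two hR.le]
    gcongr
    calc (2 : ℝ) ^ (1 - 1 / p) ≤ 2 ^ (1 : ℝ) :=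
          Real.rpow_le_rpow_of_exponent_le one_le_two (by simp; positivity)
      _ = 2 := Real.rpow_one 2
  have hK0 : 0 ≤ ∫ t in Icc c d, |f' t| ^ p :=
    setIntegral_nonneg measurableSet_Icc fun t _ => by positivity
  calc (coverN (closedBall (x₀, f x₀) R ∩ funGraph f (Icc a b)) r : ℝ)
      ≤ 2 / r * (∫ t in c..d, |f' t|) + 2 * ((d - c) / r + 2) := hcover
    _ ≤ 2 / r * ((1 + ∫ t in Icc a b, |f' t| ^ p) * (2 * R ^ (1 - 1 / p))) +
          2 * (2 * R / r + 2) := by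
        gcongr
        calc ∫ t in c..d, |f' t| ≤ (1 + ∫ t in Icc c d, |f' t| ^ p) * (2 * R) ^ (1 - 1 / p) :=
              hintegral
          _ ≤ _ := by gcongr
    _ = _ := by ring

theorem rpow_one_sub_inv_div_le {p θ R r : ℝ} (hp : 0 < p) (hθ : 0 < θ) (hθ1 : θ < 1)
    (hR : 0 < R) (hr : 0 < r) (hrR : r ≤ R ^ (1 / θ)) :
    R ^ (1 - 1 / p) / r ≤ (R / r) ^ (1 + θ / ((1 - θ) * p)) := by
  set α := θ / ((1 - θ) * p)
  -- `α` is the exponent for which `α / θ = α + 1 / p`.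
  have hα : 0 ≤ α := div_nonneg hθ.le (mul_pos (sub_pos.2 hθ1) hp).le
  have hrα : r ^ α ≤ R ^ (α + 1 / p) := calc
    r ^ α ≤ (R ^ (1 / θ)) ^ α := Real.rpow_le_rpow hr.le hrR hα
    _ = R ^ (α + 1 / p) := by
        rw [← Real.rpow_mul hR.le]
        congr 1
        simp only [α]
        field_simp [(sub_pos.2 hθ1).ne']
        ring
  rw [Real.div_rpow hR.le hr.le, div_le_div_iff₀ hr (by positivity), Real.rpow_add hr,
    Real.rpow_one, show 1 + α = (1 - 1 / p) + (α + 1 / p) by ring, Real.rpow_add hR]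
  calc R ^ (1 - 1 / p) * (r * r ^ α) = r * (R ^ (1 - 1 / p) * r ^ α) := by ring
    _ ≤ r * (R ^ (1 - 1 / p) * R ^ (α + 1 / p)) := by gcongr
    _ = R ^ (1 - 1 / p) * R ^ (α + 1 / p) * r := by ring

/-- `Metric.closedBall` in `ℝ × ℝ` (sup metric) is the axis-parallel square `Q(z₀, R)`. -/
theorem stmt11_general (f f' : ℝ → ℝ) (a b p θ : ℝ) (hp : 1 < p)
    (hθ : 0 < θ) (hθp : θ < p / (p + 1))
    (hInt : MeasureTheory.IntegrableOn (fun t => |f' t| ^ p) (Set.Icc a b))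
    (hFTC : ∀ x ∈ Set.Icc a b, ∀ y ∈ Set.Icc a b, f x - f y = ∫ t in y..x, f' t) :
    ∃ C > 0, ∀ x₀ ∈ Set.Icc a b, ∀ R r : ℝ, 0 < R → R ≤ 1 → 0 < r → r ≤ R ^ (1/θ) →
      (coverN (Metric.closedBall (x₀, f x₀) R ∩ funGraph f (Set.Icc a b)) r : ℝ) ≤
        C * (R / r) ^ (1 + θ / ((1 - θ) * p)) := by
  have hθ1 : θ < 1 := hθp.trans ((div_lt_one (by linarith)).2 (by linarith))
  set K := ∫ t in Icc a b, |f' t| ^ p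
  have hK : 0 ≤ K := setIntegral_nonneg measurableSet_Icc fun t _ => by positivity
  refine ⟨4 * (1 + K) + 8, by positivity, fun x₀ hx₀ R r hR hR1 hr hrR => ?_⟩
  have hrR' : r ≤ R := hrR.trans (by
    simpa using Real.rpow_le_rpow_of_exponent_ge hR hR1 (one_le_one_div hθ hθ1.le))
  have hRr : 1 ≤ R / r := (one_le_div hr).2 hrR'
  have hRr_pow : R / r ≤ (R / r) ^ (1 + θ / ((1 - θ) * p)) :=
    (Real.rpow_one (R / r)).symm.trans_le (Real.rpow_le_rpow_of_exponent_le hRr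
      (le_add_of_nonneg_right (div_nonneg hθ.le (mul_pos (sub_pos.2 hθ1) (by linarith)).le)))
  calc (coverN (Metric.closedBall (x₀, f x₀) R ∩ funGraph f (Set.Icc a b)) r : ℝ)
      ≤ 4 * (1 + K) * (R ^ (1 - 1 / p) / r) + 4 * (R / r) + 4 :=
        coverN_closedBall_inter_funGraph_le hp.le hInt hFTC hx₀ hR hr
    _ ≤ 4 * (1 + K) * (R / r) ^ (1 + θ / ((1 - θ) * p)) +
          4 * (R / r) ^ (1 + θ / ((1 - θ) * p)) + 4 * (R / r) ^ (1 + θ / ((1 - θ) * p)) := by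
        gcongr
        · exact rpow_one_sub_inv_div_le (by linarith) hθ hθ1 hR hr hrR
        · linarith
    _ = (4 * (1 + K) + 8) * (R / r) ^ (1 + θ / ((1 - θ) * p)) := by ring

/-- covering-number bound for graphs of `W^{1,p}` functions; here
`Metric.closedBall` in `ℝ × ℝ` (sup metric) is the axis-parallel square `Q(z₀, R)`. -/
theorem stmt11 (f f' : ℝ → ℝ) (a b p θ : ℝ) (hab : a ≤ b) (hp : 1 < p)
    (hθ : 0 < θ) (hθp : θ < p / (p + 1))
    (hcont : ContinuousOn f (Set.Icc a b))
    (hInt : MeasureTheory.IntegrableOn (fun t => |f' t| ^ p) (Set.Icc a b))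
    (hFTC : ∀ x ∈ Set.Icc a b, ∀ y ∈ Set.Icc a b, f x - f y = ∫ t in y..x, f' t) :
    ∃ C > 0, ∀ x₀ ∈ Set.Icc a b, ∀ R r : ℝ, 0 < R → R ≤ 1 → 0 < r → r ≤ R ^ (1/θ) →
      (coverN (Metric.closedBall (x₀, f x₀) R ∩ funGraph f (Set.Icc a b)) r : ℝ) ≤
        C * (R / r) ^ (1 + θ / ((1 - θ) * p)) :=
  stmt11_general f f' a b p θ hp hθ hθp hInt hFTC
end

section
/- Let (a_m) be the sequence a_m = m^{1−s} for s > 2, set ε_m = a_m − a_{m+1}, and let f : [0, a_1] → ℝ be the piecewise linear function whose graph joins in succession the points z_m = (a_m, (−1)^m a_m), m = 1, 2, …, with f(0) = 0. Then for 1 ≤ q < ∞, the q-energy E_q(f)^q = Σ_{m=1}^∞ (a_m + a_{m+1})^q / (a_m − a_{m+1})^{q−1} is finite if and only if q < s − 1. In particular f ∈ W^{1,q}([0,a_1]) for all q < s − 1 and f ∉ W^{1,s−1}([0,a_1]). -/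
open Set Metric Filter Topology MeasureTheory

/-- Graph of `f` over `I`. -/
def graphOver (f : ℝ → ℝ) (I : Set ℝ) : Set (ℝ × ℝ) := (fun t => (t, f t)) '' I

/-- The sequence `a_m = m^(1-s)`. -/
noncomputable def aseq (s : ℝ) (m : ℕ) : ℝ := (m : ℝ) ^ (1 - s)

/-- The a.e. derivative of the piecewise linear function through the points
`z_m = (a_m, (-1)^m a_m)`: it has absolute value `(a_m + a_{m+1})/(a_m - a_{m+1})`
on `(a_{m+1}, a_m)`. -/
noncomputable def pwDeriv (a : ℕ → ℝ) (x : ℝ) : ℝ :=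
  ∑' m : ℕ, Set.indicator (Set.Ioo (a (m + 2)) (a (m + 1)))
    (fun _ => (a (m + 1) + a (m + 2)) / (a (m + 1) - a (m + 2))) x

/-! On the piece `(a_{m+1}, a_m)` the zigzag has constant slope `(a_m + a_{m+1})/(a_m - a_{m+1})`,
and the pieces cover `[0, a_1]` up to the countably many corners, so `∫ |f'|^q` over `[0, a_1]`
is exactly the energy series. For `a_m = m^(1-s)` the mean value theorem gives
`a_m - a_{m+1} ≍ m^(-s)`, while `a_m + a_{m+1} ≍ m^(1-s)`; hence the `m`-th term is
`≍ m^(q-s)`, and the series converges iff `q - s < -1`. -/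

open Asymptotics Function

lemma isTheta_of_le_mul_of_le_mul {α : Type*} {l : Filter α} {f g : α → ℝ} {c₁ c₂ : ℝ}
    (hc₁ : 0 < c₁) (hg : 0 ≤ᶠ[l] g) (hlow : ∀ᶠ x in l, c₁ * g x ≤ f x)
    (hup : ∀ᶠ x in l, f x ≤ c₂ * g x) : f =Θ[l] g := by
  refine ⟨.of_bound c₂ ?_, .of_bound c₁⁻¹ ?_⟩ <;>
    filter_upwards [hg, hlow, hup] with x hgx hlx hux <;>
    have hfx : 0 ≤ f x := (mul_nonneg hc₁.le hgx).trans hlx <;>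
    rw [Real.norm_of_nonneg hfx, Real.norm_of_nonneg hgx]
  · exact hux
  · rwa [le_inv_mul_iff₀ hc₁]

lemma rpow_one_sub_sub_rpow_one_sub_bounds {s x : ℝ} (hs : 1 ≤ s) (hx : 0 < x) :
    (s - 1) * (x + 1) ^ (-s) ≤ x ^ (1 - s) - (x + 1) ^ (1 - s) ∧
      x ^ (1 - s) - (x + 1) ^ (1 - s) ≤ (s - 1) * x ^ (-s) := by
  have hderiv : ∀ t ∈ Ioo x (x + 1), HasDerivAt (fun t : ℝ => t ^ (1 - s))
      ((1 - s) * t ^ (-s)) t := fun t ht => by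
    simpa using Real.hasDerivAt_rpow_const (p := 1 - s) (Or.inl (hx.trans ht.1).ne')
  have hcont : ContinuousOn (fun t : ℝ => t ^ (1 - s)) (Icc x (x + 1)) := fun t ht =>
    (Real.continuousAt_rpow_const t _ (Or.inl (hx.trans_le ht.1).ne')).continuousWithinAt
  obtain ⟨c, ⟨hxc, hcx⟩, hslope⟩ :=
    exists_hasDerivAt_eq_slope _ _ (lt_add_one x) hcont hderiv
  have hmvt : x ^ (1 - s) - (x + 1) ^ (1 - s) = (s - 1) * c ^ (-s) := by
    rw [add_sub_cancel_left, div_one] at hslope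
    linarith
  rw [hmvt]
  have hs' : 0 ≤ s - 1 := by linarith
  have hns : -s ≤ 0 := by linarith
  exact ⟨mul_le_mul_of_nonneg_left (Real.rpow_le_rpow_of_nonpos (hx.trans hxc) hcx.le hns) hs',
    mul_le_mul_of_nonneg_left (Real.rpow_le_rpow_of_nonpos hx hxc.le hns) hs'⟩

lemma div_rpow_mul_self {x y : ℝ} (hx : 0 ≤ x) (hy : 0 < y) (q : ℝ) :
    (x / y) ^ q * y = x ^ q / y ^ (q - 1) := by
  rw [Real.div_rpow hx hy.le, Real.rpow_sub_one hy.ne']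
  field_simp

/-- The terms `(a_m + a_{m+1})^q / (a_m - a_{m+1})^(q-1)` of `E_q(f)^q`, shifted so that index `0`
is the paper's `m = 1`. -/
noncomputable def zigzagEnergy (a : ℕ → ℝ) (q : ℝ) (m : ℕ) : ℝ :=
  (a (m + 1) + a (m + 2)) ^ q / (a (m + 1) - a (m + 2)) ^ (q - 1)

section aseq

variable {s : ℝ}

lemma aseq_succ_pos (s : ℝ) (m : ℕ) : 0 < aseq s (m + 1) :=
  Real.rpow_pos_of_pos (Nat.cast_pos.mpr m.succ_pos) _

lemma strictAnti_aseq_succ (hs : 1 < s) : StrictAnti fun m => aseq s (m + 1) := fun m n hmn =>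
  Real.rpow_lt_rpow_of_neg (Nat.cast_pos.mpr m.succ_pos) (by exact_mod_cast Nat.succ_lt_succ hmn)
    (by linarith)

lemma tendsto_aseq_atTop (hs : 1 < s) : Tendsto (aseq s) atTop (𝓝 0) := by
  have h := (tendsto_rpow_neg_atTop (by linarith : 0 < s - 1)).comp tendsto_natCast_atTop_atTop
  rwa [neg_sub] at h

lemma aseq_succ_add_isTheta (hs : 1 < s) :
    (fun m => aseq s (m + 1) + aseq s (m + 2)) =Θ[atTop] fun m => aseq s (m + 1) := by
  refine isTheta_of_le_mul_of_le_mul (c₂ := 2) one_pos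
    (.of_forall fun m => (aseq_succ_pos s m).le) (.of_forall fun m => ?_) (.of_forall fun m => ?_)
  · linarith [aseq_succ_pos s (m + 1)]
  · linarith [strictAnti_aseq_succ hs m.lt_succ_self]

lemma aseq_succ_sub_aseq_succ_bounds (hs : 1 < s) (m : ℕ) :
    (s - 1) * 2 ^ (-s) * ((m + 1 : ℕ) : ℝ) ^ (-s) ≤ aseq s (m + 1) - aseq s (m + 2) ∧
      aseq s (m + 1) - aseq s (m + 2) ≤ (s - 1) * ((m + 1 : ℕ) : ℝ) ^ (-s) := by
  set x : ℝ := ((m + 1 : ℕ) : ℝ)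
  have hx : 1 ≤ x := by simp [x]
  have hnext : aseq s (m + 2) = (x + 1) ^ (1 - s) := by
    simp [aseq, x, add_assoc, one_add_one_eq_two]
  change _ ≤ x ^ (1 - s) - _ ∧ x ^ (1 - s) - _ ≤ _
  rw [hnext]
  obtain ⟨hlow, hup⟩ := rpow_one_sub_sub_rpow_one_sub_bounds hs.le (zero_lt_one.trans_le hx)
  refine ⟨le_trans ?_ hlow, hup⟩
  rw [mul_assoc, ← Real.mul_rpow zero_le_two (by linarith)]
  exact mul_le_mul_of_nonneg_left
    (Real.rpow_le_rpow_of_nonpos (by linarith) (by linarith) (by linarith)) (by linarith)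

lemma aseq_succ_sub_isTheta (hs : 1 < s) :
    (fun m => aseq s (m + 1) - aseq s (m + 2)) =Θ[atTop]
      fun m : ℕ => ((m + 1 : ℕ) : ℝ) ^ (-s) :=
  isTheta_of_le_mul_of_le_mul (by have := sub_pos.mpr hs; positivity)
    (.of_forall fun m => by positivity)
    (.of_forall fun m => (aseq_succ_sub_aseq_succ_bounds hs m).1)
    (.of_forall fun m => (aseq_succ_sub_aseq_succ_bounds hs m).2)

lemma zigzagEnergy_aseq_isTheta (hs : 1 < s) (q : ℝ) :
    zigzagEnergy (aseq s) q =Θ[atTop] fun m : ℕ => ((m + 1 : ℕ) : ℝ) ^ (q - s) := by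
  have hsub_nonneg : ∀ m, 0 ≤ aseq s (m + 1) - aseq s (m + 2) := fun m =>
    sub_nonneg.mpr (strictAnti_aseq_succ hs m.lt_succ_self).le
  refine (((aseq_succ_add_isTheta hs).rpow (r := q)
    (.of_forall fun m => (add_pos (aseq_succ_pos s m) (aseq_succ_pos s (m + 1))).le)
    (.of_forall fun m => (aseq_succ_pos s m).le)).div
    ((aseq_succ_sub_isTheta hs).rpow (r := q - 1) (.of_forall hsub_nonneg)
    (.of_forall fun m => by positivity))).trans_eventuallyEq (.of_forall fun m => ?_)
  have hx : (0 : ℝ) < ((m + 1 : ℕ) : ℝ) := Nat.cast_pos.mpr m.succ_pos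
  simp only [aseq]
  rw [← Real.rpow_mul hx.le, ← Real.rpow_mul hx.le, ← Real.rpow_sub hx]
  ring_nf

lemma summable_zigzagEnergy_aseq_iff (hs : 1 < s) (q : ℝ) :
    Summable (zigzagEnergy (aseq s) q) ↔ q < s - 1 := by
  rw [(zigzagEnergy_aseq_isTheta hs q).summable_iff_nat,
    summable_nat_add_iff 1 (f := fun n : ℕ => (n : ℝ) ^ (q - s)), Real.summable_nat_rpow]
  constructor <;> intro h <;> linarith

end aseq

section zigzag

variable {a : ℕ → ℝ}

lemma pairwise_disjoint_Ioo_of_antitone_succ (ha : Antitone fun m => a (m + 1)) :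
    Pairwise (Disjoint on fun m => Ioo (a (m + 2)) (a (m + 1))) := by
  simpa using ha.pairwise_disjoint_on_Ioo_succ

lemma pwDeriv_eq_of_mem (ha : Antitone fun m => a (m + 1)) {m : ℕ} {x : ℝ}
    (hx : x ∈ Ioo (a (m + 2)) (a (m + 1))) :
    pwDeriv a x = (a (m + 1) + a (m + 2)) / (a (m + 1) - a (m + 2)) := by
  rw [pwDeriv, tsum_eq_single m fun n hn =>
    indicator_of_notMem (disjoint_left.mp (pairwise_disjoint_Ioo_of_antitone_succ ha hn.symm) hx) _]
  exact indicator_of_mem hx _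

lemma measurable_pwDeriv (a : ℕ → ℝ) : Measurable (pwDeriv a) :=
  Measurable.tsum fun _ => measurable_const.indicator measurableSet_Ioo

lemma exists_lt_le_of_tendsto_zero (hlim : Tendsto a atTop (𝓝 0)) {x : ℝ} (hx : 0 < x)
    (hxa : x ≤ a 1) : ∃ m, a (m + 2) < x ∧ x ≤ a (m + 1) := by
  classical
  have hex : ∃ n, a (n + 1) < x :=
    ((hlim.eventually_lt_const hx).exists_forall_of_atTop).imp fun N hN => hN _ N.le_succ
  obtain ⟨m, hm⟩ := Nat.exists_eq_add_one_of_ne_zero fun h0 : Nat.find hex = 0 =>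
    (Nat.find_spec hex).not_ge (by rwa [h0])
  have hspec := Nat.find_spec hex
  rw [hm] at hspec
  exact ⟨m, hspec, not_lt.mp (Nat.find_min hex (by omega))⟩

lemma Icc_ae_eq_iUnion_Ioo (ha : Antitone fun m => a (m + 1)) (hpos : ∀ m, 0 < a (m + 1))
    (hlim : Tendsto a atTop (𝓝 0)) :
    Icc 0 (a 1) =ᵐ[volume] ⋃ m, Ioo (a (m + 2)) (a (m + 1)) := by
  have hsub : ⋃ m, Ioo (a (m + 2)) (a (m + 1)) ⊆ Icc 0 (a 1) :=
    iUnion_subset fun m x hx => ⟨(hpos (m + 1)).le.trans hx.1.le, hx.2.le.trans (ha m.zero_le)⟩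
  have hcorners : Icc 0 (a 1) \ ⋃ m, Ioo (a (m + 2)) (a (m + 1)) ⊆ insert 0 (range a) := by
    rintro x ⟨⟨hx0, hxa⟩, hxU⟩
    rcases hx0.eq_or_lt with rfl | hx0
    · exact mem_insert 0 _
    obtain ⟨m, hlt, hle⟩ := exists_lt_le_of_tendsto_zero hlim hx0 hxa
    refine mem_insert_of_mem _ ⟨m + 1, (hle.eq_of_not_lt fun hlt' => hxU ?_).symm⟩
    exact mem_iUnion.mpr ⟨m, hlt, hlt'⟩
  refine ae_eq_set.mpr ⟨measure_mono_null hcorners ?_, by simp [sdiff_eq_empty.mpr hsub]⟩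
  exact ((countable_range a).insert 0).measure_zero volume

lemma lintegral_pwDeriv (ha : StrictAnti fun m => a (m + 1)) (hpos : ∀ m, 0 < a (m + 1))
    (hlim : Tendsto a atTop (𝓝 0)) (q : ℝ) :
    ∫⁻ x in Icc 0 (a 1), ‖pwDeriv a x‖ₑ ^ q =
      ∑' m, ENNReal.ofReal (zigzagEnergy a q m) := by
  rw [setLIntegral_congr (Icc_ae_eq_iUnion_Ioo ha.antitone hpos hlim),
    lintegral_iUnion (fun _ => measurableSet_Ioo)
      (pairwise_disjoint_Ioo_of_antitone_succ ha.antitone)]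
  refine tsum_congr fun m => ?_
  have hlen : 0 < a (m + 1) - a (m + 2) := sub_pos.mpr (ha m.lt_succ_self)
  have hslope : 0 < (a (m + 1) + a (m + 2)) / (a (m + 1) - a (m + 2)) :=
    div_pos (add_pos (hpos m) (hpos (m + 1))) hlen
  rw [setLIntegral_congr_fun measurableSet_Ioo fun x hx => by
      rw [pwDeriv_eq_of_mem ha.antitone hx, Real.enorm_eq_ofReal hslope.le,
        ENNReal.ofReal_rpow_of_pos hslope],
    setLIntegral_const, Real.volume_Ioo, ← ENNReal.ofReal_mul (by positivity), zigzagEnergy,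
    ← div_rpow_mul_self (add_pos (hpos m) (hpos (m + 1))).le hlen]

lemma memLp_pwDeriv_iff (ha : StrictAnti fun m => a (m + 1)) (hpos : ∀ m, 0 < a (m + 1))
    (hlim : Tendsto a atTop (𝓝 0)) {q : ℝ} (hq : 0 < q) :
    MemLp (pwDeriv a) (ENNReal.ofReal q) (volume.restrict (Icc 0 (a 1))) ↔
      Summable (zigzagEnergy a q) := by
  have henergy_nonneg : ∀ m, 0 ≤ zigzagEnergy a q m := fun m =>
    div_nonneg (Real.rpow_nonneg (add_pos (hpos m) (hpos (m + 1))).le _)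
      (Real.rpow_nonneg (sub_pos.mpr (ha m.lt_succ_self)).le _)
  rw [MemLp, and_iff_right (measurable_pwDeriv a).aestronglyMeasurable,
    eLpNorm_lt_top_iff_lintegral_rpow_enorm_lt_top (by simpa using hq) ENNReal.ofReal_ne_top,
    ENNReal.toReal_ofReal hq.le, lintegral_pwDeriv ha hpos hlim]
  exact ⟨fun h => (ENNReal.summable_toReal h.ne).congr fun m =>
    ENNReal.toReal_ofReal (henergy_nonneg m), Summable.tsum_ofReal_lt_top⟩

end zigzag

/-- the `q`-energy of the zigzag function with `a_m = m^(1-s)` is finite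
iff `q < s - 1`; in particular `f ∈ W^{1,q}` iff `q < s - 1`. -/
theorem stmt13 (s q : ℝ) (hs : 2 < s) (hq : 1 ≤ q) :
    (Summable (fun m : ℕ =>
        (aseq s (m + 1) + aseq s (m + 2)) ^ q / (aseq s (m + 1) - aseq s (m + 2)) ^ (q - 1)) ↔
      q < s - 1) ∧
    (MeasureTheory.MemLp (pwDeriv (aseq s)) (ENNReal.ofReal q)
        (MeasureTheory.volume.restrict (Set.Icc 0 (aseq s 1))) ↔ q < s - 1) := by
  have hs₁ : 1 < s := by linarith
  have henergy := summable_zigzagEnergy_aseq_iff hs₁ q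
  exact ⟨henergy, (memLp_pwDeriv_iff (strictAnti_aseq_succ hs₁) (aseq_succ_pos s)
    (tendsto_aseq_atTop hs₁) (by linarith)).trans henergy⟩
end

section
/- With a_m = m^{1−s}·(log m)^{−2} for m ≥ 2 and s = p + 1 > 2, the piecewise linear function f on [0, a_2] whose graph joins the points z_m = (a_m, (−1)^m a_m) in succession satisfies E_p(f)^p = Σ_{m=2}^∞ (a_m + a_{m+1})^p/(a_m − a_{m+1})^{p−1} < ∞; hence f ∈ W^{1,p}([0, a_2]). -/
/-!
For `s ≥ 2` the power `m ^ (1 - s)` drops by a relative amount at least `1 / (m + 1)` from `m` to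
`m + 1`, while `(log m)⁻²` drops by at most a factor `4`; hence `a_m - a_{m+1} ≥ a_m / (8 m)`.
Each term `(a_m + a_{m+1})^p / (a_m - a_{m+1})^(p-1)` is then at most
`2 a_m (16 m)^(p-1) = 2 · 16^(p-1) / (m (log m)²)`, summable by Cauchy condensation.
The derivative takes the value `c_m = (a_m + a_{m+1}) / (a_m - a_{m+1})` on `(a_{m+1}, a_m)`,
so `∫ |f'|^p = Σ c_m^p (a_m - a_{m+1})`, which is the same series.
-/

open Set Metric Filter Topology MeasureTheory

/-- The sequence `a_m = m^(1-s) (log m)^{-2}`. -/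
noncomputable def aseqlog (s : ℝ) (m : ℕ) : ℝ := (m : ℝ) ^ (1 - s) * (Real.log m) ^ (-2 : ℝ)

/-- The a.e. derivative of the piecewise linear zigzag through `z_m = (a_m, (-1)^m a_m)`,
`m ≥ 2`. -/
noncomputable def pwDerivLog (a : ℕ → ℝ) (x : ℝ) : ℝ :=
  ∑' m : ℕ, Set.indicator (Set.Ioo (a (m + 3)) (a (m + 2)))
    (fun _ => (a (m + 2) + a (m + 3)) / (a (m + 2) - a (m + 3))) x

open Function

section DisjointIndicator

variable {α ι M : Type*} [AddCommMonoid M] [TopologicalSpace M] {s : ι → Set α}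
  {f : ι → α → M}

theorem tsum_indicator_apply_of_mem (hs : Pairwise (Disjoint on s)) {i : ι} {x : α}
    (hx : x ∈ s i) : ∑' j, (s j).indicator (f j) x = f i x := by
  rw [tsum_eq_single i fun j hj =>
    indicator_of_notMem (fun hxj => disjoint_left.mp (hs hj) hxj hx) _, indicator_of_mem hx]

theorem tsum_indicator_apply_of_forall_notMem {x : α} (hx : ∀ i, x ∉ s i) :
    ∑' j, (s j).indicator (f j) x = 0 := by
  simp [indicator_of_notMem (hx _)]

theorem map_tsum_indicator_apply {N : Type*} [AddCommMonoid N] [TopologicalSpace N]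
    (hs : Pairwise (Disjoint on s)) (g : M → N) (hg : g 0 = 0) (x : α) :
    g (∑' i, (s i).indicator (f i) x) = ∑' i, (s i).indicator (g ∘ f i) x := by
  by_cases hx : ∃ i, x ∈ s i
  · obtain ⟨i, hi⟩ := hx
    rw [tsum_indicator_apply_of_mem hs hi, tsum_indicator_apply_of_mem hs hi]
    rfl
  · push Not at hx
    rw [tsum_indicator_apply_of_forall_notMem hx, tsum_indicator_apply_of_forall_notMem hx, hg]

theorem summable_indicator_apply (hs : Pairwise (Disjoint on s)) (x : α) :
    Summable fun i => (s i).indicator (f i) x := by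
  refine summable_of_hasFiniteSupport
    (show (support _).Finite from Set.Subsingleton.finite fun i hi j hj => ?_)
  by_contra hij
  exact disjoint_left.mp (hs hij) (mem_of_indicator_ne_zero hi) (mem_of_indicator_ne_zero hj)

theorem measurable_tsum_indicator [MeasurableSpace α] [MeasurableSpace M] [BorelSpace M]
    [TopologicalSpace.PseudoMetrizableSpace M] [MeasurableAdd₂ M] {s : ℕ → Set α}
    {f : ℕ → α → M} (hs : Pairwise (Disjoint on s)) (hsm : ∀ i, MeasurableSet (s i))
    (hf : ∀ i, Measurable (f i)) : Measurable fun x => ∑' i, (s i).indicator (f i) x :=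
  measurable_of_tendsto_metrizable
    (fun n => Finset.measurable_sum (Finset.range n) fun i _ => (hf i).indicator (hsm i))
    (tendsto_pi_nhds.2 fun x => (summable_indicator_apply hs x).hasSum.tendsto_sum_nat)

end DisjointIndicator

theorem Real.rpow_div_add_one_le_rpow_sub_rpow_add_one {x r : ℝ} (hx : 0 < x) (hr : r ≤ -1) :
    x ^ r / (x + 1) ≤ x ^ r - (x + 1) ^ r := by
  have hrpow : (x + 1) ^ (r + 1) ≤ x ^ (r + 1) :=
    Real.rpow_le_rpow_of_nonpos hx (by linarith) (by linarith)
  rw [Real.rpow_add_one (by positivity), Real.rpow_add_one hx.ne'] at hrpow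
  rw [div_le_iff₀ (by positivity)]
  linarith

theorem Real.log_add_one_le_two_mul_log {x : ℝ} (hx : 2 ≤ x) :
    Real.log (x + 1) ≤ 2 * Real.log x := by
  calc Real.log (x + 1) ≤ Real.log (x ^ 2) := Real.log_le_log (by linarith) (by nlinarith)
    _ = 2 * Real.log x := by rw [Real.log_pow]; norm_num

theorem Real.rpow_div_rpow_sub_one_eq_mul {A d : ℝ} (p : ℝ) (hA : 0 < A) (hd : 0 < d) :
    A ^ p / d ^ (p - 1) = A * (A / d) ^ (p - 1) := by
  rw [Real.div_rpow hA.le hd.le, Real.rpow_sub_one hA.ne']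
  field_simp

theorem Real.rpow_div_rpow_sub_one_eq_div_rpow_mul {A d : ℝ} (p : ℝ) (hA : 0 ≤ A)
    (hd : 0 < d) :
    A ^ p / d ^ (p - 1) = (A / d) ^ p * d := by
  rw [Real.div_rpow hA hd.le, Real.rpow_sub_one hd.ne']
  field_simp

theorem Real.rpow_div_rpow_sub_one_le {A d C K p : ℝ} (hA : 0 < A) (hd : 0 < d) (hp : 1 ≤ p)
    (hAC : A ≤ C) (hAK : A ≤ K * d) : A ^ p / d ^ (p - 1) ≤ C * K ^ (p - 1) := by
  rw [Real.rpow_div_rpow_sub_one_eq_mul p hA hd]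
  gcongr
  · linarith
  · exact (div_le_iff₀ hd).2 hAK

theorem aseqlog_eq_mul_inv (s : ℝ) (n : ℕ) :
    aseqlog s n = (n : ℝ) ^ (1 - s) * (Real.log n ^ 2)⁻¹ := by
  rw [aseqlog, Real.rpow_neg (Real.log_natCast_nonneg n), Real.rpow_two]

theorem aseqlog_pos (s : ℝ) {n : ℕ} (hn : 2 ≤ n) : 0 < aseqlog s n := by
  have hlog : 0 < Real.log n := Real.log_pos (by exact_mod_cast hn)
  rw [aseqlog_eq_mul_inv]
  positivity

theorem aseqlog_div_le_sub_succ {s : ℝ} (hs : 2 ≤ s) {n : ℕ} (hn : 2 ≤ n) :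
    aseqlog s n / (8 * n) ≤ aseqlog s n - aseqlog s (n + 1) := by
  have hx : (2 : ℝ) ≤ n := by exact_mod_cast hn
  have hlog : 0 < Real.log n := Real.log_pos (by linarith)
  have hlog_le : Real.log n ≤ Real.log (n + 1) := Real.log_le_log (by linarith) (by linarith)
  set u : ℝ → ℝ := fun x => x ^ (1 - s)
  have hu : u n / (2 * n) ≤ u n - u (n + 1) := by
    refine le_trans ?_
      (Real.rpow_div_add_one_le_rpow_sub_rpow_add_one (by linarith) (by linarith))
    gcongr
    linarith
  have hv : (Real.log n ^ 2)⁻¹ / 4 ≤ (Real.log (n + 1) ^ 2)⁻¹ := by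
    rw [← inv_mul_eq_div, ← mul_inv, show (4 : ℝ) = 2 ^ 2 by norm_num, ← mul_pow]
    exact inv_anti₀ (pow_pos (hlog.trans_le hlog_le) 2)
      (pow_le_pow_left₀ (hlog.trans_le hlog_le).le (Real.log_add_one_le_two_mul_log hx) 2)
  have hv' : (Real.log (n + 1) ^ 2)⁻¹ ≤ (Real.log n ^ 2)⁻¹ := by gcongr
  simp only [aseqlog_eq_mul_inv, Nat.cast_add_one]
  have hu_pos : 0 < u n := by positivity
  calc u n * (Real.log n ^ 2)⁻¹ / (8 * n)
      = u n / (2 * n) * ((Real.log n ^ 2)⁻¹ / 4) := by ring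
    _ ≤ (u n - u (n + 1)) * (Real.log (n + 1) ^ 2)⁻¹ := by
        gcongr
        exact (div_pos hu_pos (by positivity)).le.trans hu
    _ ≤ u n * (Real.log n ^ 2)⁻¹ - u (n + 1) * (Real.log (n + 1) ^ 2)⁻¹ := by
        nlinarith [mul_le_mul_of_nonneg_left hv' hu_pos.le]

theorem aseqlog_succ_lt {s : ℝ} (hs : 2 ≤ s) {n : ℕ} (hn : 2 ≤ n) :
    aseqlog s (n + 1) < aseqlog s n := by
  have hgap := aseqlog_div_le_sub_succ hs hn
  have : 0 < aseqlog s n / (8 * n) := div_pos (aseqlog_pos s hn) (by positivity)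
  linarith

theorem aseqlog_mul_rpow_eq_aseqlog_two (s : ℝ) {n : ℕ} (hn : 0 < n) :
    aseqlog s n * (n : ℝ) ^ (s - 2) = aseqlog 2 n := by
  have hx : (0 : ℝ) < n := by exact_mod_cast hn
  rw [aseqlog, aseqlog, mul_right_comm, ← Real.rpow_add hx]
  ring_nf

theorem aseqlog_energy_term_le {p : ℝ} (hp : 1 ≤ p) {n : ℕ} (hn : 2 ≤ n) :
    (aseqlog (p + 1) n + aseqlog (p + 1) (n + 1)) ^ p /
        (aseqlog (p + 1) n - aseqlog (p + 1) (n + 1)) ^ (p - 1) ≤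
      2 * 16 ^ (p - 1) * aseqlog 2 n := by
  set a := aseqlog (p + 1)
  have hx : (0 : ℝ) < n := by exact_mod_cast (by omega : 0 < n)
  have han := aseqlog_pos (p + 1) hn
  have hgap := aseqlog_div_le_sub_succ (s := p + 1) (by linarith) hn
  have hd : 0 < a n - a (n + 1) := lt_of_lt_of_le (by positivity) hgap
  have hsum_pos : 0 < a n + a (n + 1) := add_pos han (aseqlog_pos _ (by omega))
  have hsum_le : a n + a (n + 1) ≤ 2 * a n := by linarith
  have hsum_le' : a n + a (n + 1) ≤ 16 * n * (a n - a (n + 1)) := by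
    have h := mul_le_mul_of_nonneg_left hgap (by positivity : (0 : ℝ) ≤ 16 * n)
    rw [show 16 * (n : ℝ) * (a n / (8 * n)) = 2 * a n by field_simp; ring] at h
    linarith
  calc _ ≤ 2 * a n * (16 * n) ^ (p - 1) :=
        Real.rpow_div_rpow_sub_one_le hsum_pos hd hp hsum_le hsum_le'
    _ = 2 * 16 ^ (p - 1) * (a n * (n : ℝ) ^ (p + 1 - 2)) := by
        rw [Real.mul_rpow (by norm_num) hx.le, show p + 1 - 2 = p - 1 by ring]
        ring
    _ = 2 * 16 ^ (p - 1) * aseqlog 2 n := by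
        rw [aseqlog_mul_rpow_eq_aseqlog_two _ (by omega)]

theorem summable_aseqlog_two : Summable (aseqlog 2) := by
  have hcond (k : ℕ) :
      (2 : ℝ) ^ k * aseqlog 2 (2 ^ k) = Real.log 2 ^ (-2 : ℝ) * (k : ℝ) ^ (-2 : ℝ) := by
    rw [aseqlog, Nat.cast_pow, Nat.cast_ofNat, Real.log_pow,
      Real.mul_rpow (Nat.cast_nonneg k) (Real.log_nonneg one_le_two),
      show (1 : ℝ) - 2 = -1 by norm_num, Real.rpow_neg_one]
    field_simp
  rw [← summable_condensed_iff_of_eventually_nonneg]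
  · simp_rw [hcond]
    exact (Real.summable_nat_rpow.2 (by norm_num)).mul_left _
  · exact Eventually.of_forall fun n => by
      rw [Pi.zero_apply, aseqlog_eq_mul_inv]
      positivity
  · filter_upwards [eventually_ge_atTop 2] with n hn
    exact (aseqlog_succ_lt le_rfl hn).le

theorem memLp_tsum_indicator_Ioo {a : ℕ → ℝ} (ha : Antitone a) (c : ℕ → ℝ) {p : ℝ}
    (hp : 0 < p) (h : Summable fun m => |c m| ^ p * (a m - a (m + 1))) :
    MemLp (fun x => ∑' m, (Ioo (a (m + 1)) (a m)).indicator (fun _ => c m) x)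
      (ENNReal.ofReal p) := by
  have hdisj : Pairwise (Disjoint on fun m => Ioo (a (m + 1)) (a m)) := by
    simpa only [Order.succ_eq_add_one] using ha.pairwise_disjoint_on_Ioo_succ
  refine ⟨(measurable_tsum_indicator hdisj (fun _ => measurableSet_Ioo)
    fun _ => measurable_const).aestronglyMeasurable, ?_⟩
  rw [eLpNorm_lt_top_iff_lintegral_rpow_enorm_lt_top (ENNReal.ofReal_pos.2 hp).ne'
    ENNReal.ofReal_ne_top, ENNReal.toReal_ofReal hp.le]
  have hpow (x : ℝ) := map_tsum_indicator_apply hdisj (fun y : ℝ => ‖y‖ₑ ^ p)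
    (by simp [ENNReal.zero_rpow_of_pos hp]) x (f := fun m _ => c m)
  calc ∫⁻ x, ‖∑' m, (Ioo (a (m + 1)) (a m)).indicator (fun _ => c m) x‖ₑ ^ p
      = ∑' m, ‖c m‖ₑ ^ p * volume (Ioo (a (m + 1)) (a m)) := by
        simp_rw [hpow, comp_def]
        rw [lintegral_tsum fun m => (measurable_const.indicator measurableSet_Ioo).aemeasurable]
        simp only [lintegral_indicator_const measurableSet_Ioo]
    _ = ∑' m, ENNReal.ofReal (|c m| ^ p * (a m - a (m + 1))) := by
        simp only [Real.volume_Ioo, Real.enorm_eq_ofReal_abs,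
          ENNReal.ofReal_rpow_of_nonneg (abs_nonneg _) hp.le,
          ENNReal.ofReal_mul (Real.rpow_nonneg (abs_nonneg _) _)]
    _ < ⊤ := by
        rw [← ENNReal.ofReal_tsum_of_nonneg (fun m => mul_nonneg (by positivity)
          (sub_nonneg.2 (ha (Nat.le_succ m)))) h]
        exact ENNReal.ofReal_lt_top

/-- with the logarithmic correction, the `p`-energy is finite,
so `f ∈ W^{1,p}`. -/
theorem stmt14 (p : ℝ) (hp : 1 < p) :
    Summable (fun m : ℕ =>
      (aseqlog (p + 1) (m + 2) + aseqlog (p + 1) (m + 3)) ^ p /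
        (aseqlog (p + 1) (m + 2) - aseqlog (p + 1) (m + 3)) ^ (p - 1)) ∧
    MeasureTheory.MemLp (pwDerivLog (aseqlog (p + 1))) (ENNReal.ofReal p)
      (MeasureTheory.volume.restrict (Set.Icc 0 (aseqlog (p + 1) 2))) := by
  have hgap (m : ℕ) : 0 < aseqlog (p + 1) (m + 2) - aseqlog (p + 1) (m + 3) :=
    sub_pos.2 (aseqlog_succ_lt (by linarith) (by omega))
  have hsum_pos (m : ℕ) : 0 < aseqlog (p + 1) (m + 2) + aseqlog (p + 1) (m + 3) :=
    add_pos (aseqlog_pos _ (by omega)) (aseqlog_pos _ (by omega))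
  have hanti : Antitone fun m => aseqlog (p + 1) (m + 2) :=
    antitone_nat_of_succ_le fun m => (sub_pos.1 (hgap m)).le
  have henergy : Summable fun m : ℕ =>
      (aseqlog (p + 1) (m + 2) + aseqlog (p + 1) (m + 3)) ^ p /
        (aseqlog (p + 1) (m + 2) - aseqlog (p + 1) (m + 3)) ^ (p - 1) :=
    Summable.of_nonneg_of_le (fun m => div_nonneg (Real.rpow_nonneg (hsum_pos m).le _)
        (Real.rpow_nonneg (hgap m).le _))
      (fun m => aseqlog_energy_term_le hp.le (by omega : 2 ≤ m + 2))
      (((summable_nat_add_iff 2).2 summable_aseqlog_two).mul_left _)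
  refine ⟨henergy, (memLp_tsum_indicator_Ioo hanti _ (by linarith)
    (henergy.congr fun m => ?_)).restrict _⟩
  rw [abs_of_pos (div_pos (hsum_pos m) (hgap m)),
    Real.rpow_div_rpow_sub_one_eq_div_rpow_mul p (hsum_pos m).le (hgap m)]
end
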